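/- arXiv:2108.09694 — 4 statements merged into one kernel-verified Lean document; each statement's English description precedes it below -/
import Mathlib

section
/- Let G be a countable group equipped with a left-invariant linear order ≤ (that is, a ≤ b implies c*a ≤ c*b for all a, b, c ∈ G). Then there exist a map i : G → ℝ with i(1) = 0 that is strictly order-preserving (g < h implies i(g) < i(h), so in particular i is injective), and a group homomorphism ρ from G to the group of order-automorphisms of ℝ (strictly increasing bijections ℝ → ℝ under composition) such that ρ(g)(i(h)) = i(g*h) for all g, h ∈ G. In particular the orbit map g ↦ ρ(g)(0) equals i and is injective, so ρ is a faithful action. -/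
/-!
`G ×ₗ ℚ` is a countable dense linear order without endpoints, so by Cantor's theorem it is
order-isomorphic to `ℚ`, and `G` acts on it order-preservingly by left multiplication on the
first coordinate. Transporting this action to `ℚ` and extending each order automorphism of `ℚ`
to `ℝ` by suprema (the unique monotone extension) gives `ρ`; the orbit of `0 = φ (1, 0)` is
`g ↦ φ (g, 0)`, which is strictly monotone.
-/

namespace OrderIso

def conjHom {α β : Type*} [Preorder α] [Preorder β] (φ : α ≃o β) : (α ≃o α) →* (β ≃o β) where
  toFun e := φ.symm.trans (e.trans φ)
  map_one' := RelIso.ext φ.apply_symm_apply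
  map_mul' e f := RelIso.ext fun x => by simp [RelIso.mul_apply]

@[simp] lemma conjHom_apply {α β : Type*} [Preorder α] [Preorder β] (φ : α ≃o β) (e : α ≃o α)
    (x : β) : conjHom φ e x = φ (e (φ.symm x)) := rfl

noncomputable def ratExtend (e : ℚ ≃o ℚ) (x : ℝ) : ℝ :=
  sSup ((fun q : ℚ => (e q : ℝ)) '' {q : ℚ | (q : ℝ) < x})

variable (e : ℚ ≃o ℚ)

lemma ratExtend_bddAbove (x : ℝ) :
    BddAbove ((fun q : ℚ => (e q : ℝ)) '' {q : ℚ | (q : ℝ) < x}) := by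
  obtain ⟨r, hr⟩ := exists_rat_gt x
  refine ⟨e r, ?_⟩
  rintro _ ⟨q, hq, rfl⟩
  exact Rat.cast_le.mpr (e.monotone (by exact_mod_cast (hq.trans hr).le))

lemma le_ratExtend {q : ℚ} {x : ℝ} (h : (q : ℝ) < x) : (e q : ℝ) ≤ ratExtend e x :=
  le_csSup (ratExtend_bddAbove e x) ⟨q, h, rfl⟩

lemma ratExtend_le {x y : ℝ} (h : ∀ q : ℚ, (q : ℝ) < x → (e q : ℝ) ≤ y) :
    ratExtend e x ≤ y := by
  obtain ⟨q, hq⟩ := exists_rat_lt x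
  refine csSup_le ⟨_, q, hq, rfl⟩ ?_
  rintro _ ⟨q, hq, rfl⟩
  exact h q hq

lemma ratExtend_le_of_le {x : ℝ} {r : ℚ} (h : x ≤ r) : ratExtend e x ≤ e r :=
  ratExtend_le e fun q hq => by exact_mod_cast e.monotone (by exact_mod_cast (hq.trans_le h).le)

@[simp] lemma ratExtend_ratCast (r : ℚ) : ratExtend e r = e r := by
  refine (ratExtend_le_of_le e le_rfl).antisymm (le_of_forall_lt fun c hc => ?_)
  obtain ⟨s, hcs, hs⟩ := exists_rat_btwn hc
  have hsr : e.symm s < r := by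
    rw [← e.lt_iff_lt, e.apply_symm_apply]; exact_mod_cast hs
  calc c < s := hcs
    _ = e (e.symm s) := by rw [e.apply_symm_apply]
    _ ≤ ratExtend e r := le_ratExtend e (by exact_mod_cast hsr)

lemma ratExtend_strictMono : StrictMono (ratExtend e) := by
  intro x y hxy
  obtain ⟨q, hxq, hqy⟩ := exists_rat_btwn hxy
  obtain ⟨r, hqr, hry⟩ := exists_rat_btwn hqy
  calc ratExtend e x ≤ e q := ratExtend_le_of_le e hxq.le
    _ < e r := by exact_mod_cast e.strictMono (by exact_mod_cast hqr)
    _ ≤ ratExtend e y := le_ratExtend e hry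

-- Uses that the image of `e`, all of `ℚ`, is dense in `ℝ`.
lemma eq_ratExtend_of_monotone {f : ℝ → ℝ} (hf : Monotone f) (hfe : ∀ q : ℚ, f q = e q) :
    f = ratExtend e := by
  funext x
  refine le_antisymm ?_ (ratExtend_le e fun q hq => hfe q ▸ hf hq.le)
  by_contra! hlt
  obtain ⟨s, hs, hsf⟩ := exists_rat_btwn hlt
  rcases lt_or_ge ((e.symm s : ℚ) : ℝ) x with hx | hx
  · have := le_ratExtend e hx
    rw [e.apply_symm_apply] at this
    exact hs.not_ge this
  · have := hf hx
    rw [hfe, e.apply_symm_apply] at this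
    exact hsf.not_ge this

lemma ratExtend_trans (f : ℚ ≃o ℚ) : ratExtend (f.trans e) = ratExtend e ∘ ratExtend f :=
  (eq_ratExtend_of_monotone _ ((ratExtend_strictMono e).monotone.comp
    (ratExtend_strictMono f).monotone) fun q => by simp).symm

lemma ratExtend_refl : ratExtend (OrderIso.refl ℚ) = id :=
  (eq_ratExtend_of_monotone _ monotone_id fun _ => rfl).symm

noncomputable def ratExtendHom : (ℚ ≃o ℚ) →* (ℝ ≃o ℝ) where
  toFun e :=
    { toFun := ratExtend e
      invFun := ratExtend e.symm
      left_inv x := by rw [← Function.comp_apply (f := ratExtend e.symm), ← ratExtend_trans,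
        self_trans_symm, ratExtend_refl, id]
      right_inv x := by rw [← Function.comp_apply (f := ratExtend e), ← ratExtend_trans,
        symm_trans_self, ratExtend_refl, id]
      map_rel_iff' := (ratExtend_strictMono e).le_iff_le }
  map_one' := RelIso.ext fun x => congrFun ratExtend_refl x
  map_mul' e f := RelIso.ext fun x => congrFun (ratExtend_trans e f) x

@[simp] lemma ratExtendHom_apply (x : ℝ) : ratExtendHom e x = ratExtend e x := rfl

end OrderIso

namespace Prod.Lex

variable (G α : Type*) [Group G] [Preorder G] [MulLeftMono G] [Preorder α]

def mulLeftHom : G →* (G ×ₗ α ≃o G ×ₗ α) where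
  toFun g := prodLexCongr (OrderIso.mulLeft g) (OrderIso.refl α)
  map_one' := RelIso.ext fun p => by simp [RelIso.one_apply, Prod.map]
  map_mul' g h := RelIso.ext fun p => by simp [RelIso.mul_apply, Prod.map, mul_assoc]

@[simp] lemma mulLeftHom_apply_toLex (g x : G) (a : α) :
    mulLeftHom G α g (toLex (x, a)) = toLex (g * x, a) := rfl

end Prod.Lex

lemma exists_orderIso_lex_rat_apply_eq_zero {G : Type*} [LinearOrder G] [Countable G] (a : G ×ₗ ℚ) :
    ∃ φ : G ×ₗ ℚ ≃o ℚ, φ a = 0 := by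
  have : Nonempty G := ⟨(ofLex a).1⟩
  have : Countable (G ×ₗ ℚ) := inferInstanceAs (Countable (G × ℚ))
  obtain ⟨φ⟩ : Nonempty (G ×ₗ ℚ ≃o ℚ) := Order.iso_of_countable_dense _ _
  exact ⟨φ.trans (OrderIso.addRight (-φ a)), add_neg_cancel (φ a)⟩

/-- Let `G` be a countable group with a left-invariant linear order.
Then there exist a strictly order-preserving map `i : G → ℝ` with `i 1 = 0` and a
group homomorphism `ρ : G →* (ℝ ≃o ℝ)` (order-automorphisms of `ℝ`) such that
`ρ g (i h) = i (g * h)` for all `g h`; in particular the orbit map `g ↦ ρ g 0`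
equals `i`, is injective, and `ρ` is faithful. -/
theorem left_order_gives_allowed_action
    {G : Type*} [Group G] [Countable G] [LinearOrder G]
    [CovariantClass G G (· * ·) (· ≤ ·)] :
    ∃ (i : G → ℝ) (ρ : G →* (ℝ ≃o ℝ)),
      i 1 = 0 ∧ StrictMono i ∧
      (∀ g h : G, ρ g (i h) = i (g * h)) ∧
      (∀ g : G, ρ g 0 = i g) ∧
      Function.Injective (fun g : G => ρ g (0 : ℝ)) ∧
      Function.Injective ρ := by
  obtain ⟨φ, hφ⟩ := exists_orderIso_lex_rat_apply_eq_zero (toLex ((1 : G), (0 : ℚ)))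
  let i : G → ℝ := fun g => φ (toLex (g, 0))
  let ρ : G →* (ℝ ≃o ℝ) :=
    OrderIso.ratExtendHom.comp ((OrderIso.conjHom φ).comp (Prod.Lex.mulLeftHom G ℚ))
  have hi_one : i 1 = 0 := by simp [i, hφ]
  have hi : StrictMono i := fun g h hgh =>
    Rat.cast_lt.mpr (φ.strictMono (Prod.Lex.toLex_lt_toLex.mpr (Or.inl hgh)))
  have hρi (g h : G) : ρ g (i h) = i (g * h) := by simp [ρ, i]
  have hρ_zero (g : G) : ρ g 0 = i g := by rw [← hi_one, hρi, mul_one]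
  refine ⟨i, ρ, hi_one, hi, hρi, hρ_zero, ?_, fun g h hgh => hi.injective ?_⟩
  · simpa only [hρ_zero] using hi.injective
  · rw [← hρ_zero, ← hρ_zero, hgh]
end

section
/- Let G be a group admitting an injective group homomorphism ρ from G into the group of order-automorphisms of ℝ (strictly increasing bijections ℝ → ℝ under composition). Then G admits a left-invariant linear order; in particular, G is left-orderable. -/
noncomputable def WR : Type := ℝ

noncomputable instance : LinearOrder WR :=
  @linearOrderOfSTO ℝ WellOrderingRel
    (by have := WellOrderingRel.isWellOrder (α := ℝ); exact inferInstance) (Classical.decRel _)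

instance : WellFoundedLT WR :=
  (WellOrderingRel.isWellOrder (α := ℝ)).toIsWellFounded

/-- If a group `G` admits an injective homomorphism into the group of
order-automorphisms of `ℝ`, then `G` admits a left-invariant linear order, i.e. `G`
is left-orderable. -/
theorem left_orderable_of_faithful_action_on_R
    {G : Type*} [Group G] (ρ : G →* (ℝ ≃o ℝ)) (hρ : Function.Injective ρ) :
    ∃ lo : LinearOrder G, ∀ a b c : G, lo.le a b → lo.le (c * a) (c * b) := by
  classical
  -- map g to the function (x : WR) ↦ ρ g x, in lex order
  let F : G → Lex (WR → ℝ) := fun g => toLex (fun x => ρ g (show ℝ from x))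
  have hF : Function.Injective F := by
    intro a b h
    apply hρ
    ext x
    exact congrFun (toLex.injective h) x
  refine ⟨LinearOrder.lift' F hF, ?_⟩
  intro a b c hab
  have hab' : F a ≤ F b := hab
  show F (c * a) ≤ F (c * b)
  rcases eq_or_lt_of_le hab' with h | h
  · exact le_of_eq (by rw [hF h])
  · obtain ⟨i, hlt, hi⟩ := h
    refine le_of_lt ⟨i, ?_, ?_⟩
    · intro j hj
      simp only [F, Pi.toLex_apply, map_mul]
      exact congrArg (ρ c) (hlt j hj)
    · simp only [F, Pi.toLex_apply, map_mul]
      exact (ρ c).strictMono hi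
end

section
/- Let G be a group whose lower central series G = γ₀(G) ⊇ γ₁(G) = [G,G] ⊇ γ₂(G) ⊇ ⋯ satisfies ⋂ₙ γₙ(G) = {1}, and suppose that for every n the abelian quotient group γₙ(G)/γₙ₊₁(G) admits a translation-invariant linear order. Then for every translation-invariant linear order ≼ on the abelianization G/[G,G], there exists a left-invariant linear order ≤ on G such that for all g, h ∈ G whose images ḡ, h̄ in G/[G,G] are distinct, one has g ≤ h if and only if ḡ ≼ h̄. (The paper calls such an order a lexicographic ordering on G.) -/
/-!
Compare `g` and `h` first by their images in the abelianization; when these agree, `g⁻¹ * h`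
lies in `γ₁(G)`, and since `⋂ γₙ(G) = 1` it has a deepest layer `γₙ(G)` containing it, where its
class in `γₙ(G)/γₙ₊₁(G)` is non-trivial; the sign of that class decides. Equivalently, the elements
`> 1` form a positive cone: leading terms at different depths do not interact, and leading terms
at the same depth multiply in the layer, so the cone is closed under multiplication.
-/

section

open QuotientGroup

variable {G : Type*} [Group G]

structure Subsemigroup.IsPositiveCone (P : Subsemigroup G) (K : Subgroup G) : Prop where
  inv_notMem : ∀ g ∈ P, g⁻¹ ∉ P
  mem_or_inv_mem : ∀ g ∈ K, g ≠ 1 → g ∈ P ∨ g⁻¹ ∈ P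

namespace Subsemigroup.IsPositiveCone

variable {P : Subsemigroup G} {K : Subgroup G}

theorem one_notMem (hP : P.IsPositiveCone K) : (1 : G) ∉ P :=
  fun h => hP.inv_notMem 1 h (by rwa [inv_one])

noncomputable abbrev linearOrder (hP : P.IsPositiveCone ⊤) : LinearOrder G where
  le a b := a⁻¹ * b ∈ P ∨ a = b
  le_refl _ := Or.inr rfl
  le_trans a b c := by
    rintro (hab | rfl) (hbc | rfl)
    · exact Or.inl (by simpa [mul_assoc] using mul_mem hab hbc)
    all_goals simp_all
  le_antisymm a b := by
    rintro (hab | rfl) (hba | hba)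
    · exact absurd (by simpa using hba) (hP.inv_notMem _ hab)
    all_goals first | rfl | exact hba.symm
  le_total a b := by
    by_cases hab : a = b
    · exact Or.inl (Or.inr hab)
    rcases hP.mem_or_inv_mem (a⁻¹ * b) (Subgroup.mem_top _) (by rwa [Ne, inv_mul_eq_one]) with
      h | h
    · exact Or.inl (Or.inl h)
    · exact Or.inr (Or.inl (by simpa using h))
  toDecidableLE := Classical.decRel _

theorem linearOrder_lt_iff (hP : P.IsPositiveCone ⊤) {a b : G} :
    hP.linearOrder.lt a b ↔ a⁻¹ * b ∈ P := by
  change (a⁻¹ * b ∈ P ∨ a = b) ∧ ¬(b⁻¹ * a ∈ P ∨ b = a) ↔ _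
  constructor
  · rintro ⟨hab | rfl, hba⟩
    · exact hab
    · exact absurd (Or.inr rfl) hba
  · refine fun hab => ⟨Or.inl hab, ?_⟩
    rintro (hba | rfl)
    · exact hP.inv_notMem _ hab (by simpa using hba)
    · exact hP.one_notMem (by simpa using hab)

theorem linearOrder_mul_le_mul_left (hP : P.IsPositiveCone ⊤) {a b : G} (c : G)
    (hab : hP.linearOrder.le a b) : hP.linearOrder.le (c * a) (c * b) := by
  rcases hab with hab | rfl
  · exact Or.inl (by simpa [mul_assoc] using hab)
  · exact Or.inr rfl

end Subsemigroup.IsPositiveCone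

section LiftCone

variable {A : Type*} [Group A] [LinearOrder A] [MulLeftMono A] (π : G →* A)

def liftCone (P : Subsemigroup G) : Subsemigroup G where
  carrier := {g | 1 < π g ∨ (π g = 1 ∧ g ∈ P)}
  mul_mem' := by
    rintro g h (hg | ⟨hg, hgP⟩) (hh | ⟨hh, hhP⟩) <;> simp only [Set.mem_ofPred_eq, map_mul]
    · exact Or.inl (Left.one_lt_mul' hg hh)
    · exact Or.inl (by rwa [hh, mul_one])
    · exact Or.inl (by rwa [hg, one_mul])
    · exact Or.inr ⟨by rw [hg, hh, one_mul], mul_mem hgP hhP⟩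

variable {π} {P : Subsemigroup G}

theorem Subsemigroup.IsPositiveCone.liftCone (hP : P.IsPositiveCone π.ker) :
    (liftCone π P).IsPositiveCone ⊤ where
  inv_notMem := by
    rintro g (hg | ⟨hg, hgP⟩) (hinv | ⟨hinv, hinvP⟩) <;> rw [map_inv] at hinv
    · exact (Left.one_lt_inv_iff.1 hinv).not_gt hg
    · exact hg.ne' (inv_eq_one.1 hinv)
    · rw [hg, inv_one] at hinv
      exact hinv.false
    · exact hP.inv_notMem g hgP hinvP
  mem_or_inv_mem g _ hg := by
    by_cases hπg : π g = 1
    · exact (hP.mem_or_inv_mem g hπg hg).imp (fun h => Or.inr ⟨hπg, h⟩)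
        (fun h => Or.inr ⟨by rw [map_inv, hπg, inv_one], h⟩)
    · rcases Ne.lt_or_gt hπg with h | h
      · exact Or.inr (Or.inl (by rwa [map_inv, Left.one_lt_inv_iff]))
      · exact Or.inl (Or.inl h)

theorem Subsemigroup.IsPositiveCone.linearOrder_le_iff_of_map_ne
    (hP : (_root_.liftCone π P).IsPositiveCone ⊤) {g h : G} (hgh : π g ≠ π h) :
    hP.linearOrder.le g h ↔ π g ≤ π h := by
  have hne : g ≠ h := fun e => hgh (congrArg π e)
  have hπ : π (g⁻¹ * h) ≠ 1 := by rwa [map_mul, map_inv, Ne, inv_mul_eq_one]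
  have hlt : hP.linearOrder.lt g h ↔ π g < π h := by
    rw [hP.linearOrder_lt_iff]
    change 1 < π (g⁻¹ * h) ∨ (π (g⁻¹ * h) = 1 ∧ g⁻¹ * h ∈ P) ↔ _
    rw [or_iff_left (fun h => hπ h.1), map_mul, map_inv, lt_inv_mul_iff_lt]
  let := hP.linearOrder
  exact hne.le_iff_lt.trans (hlt.trans hgh.le_iff_lt.symm)

end LiftCone

namespace Filtration

theorem exists_mem_notMem_succ {N : ℕ → Subgroup G} (hsep : ⨅ n, N n = ⊥) {g : G}
    (hg : g ∈ N 0) (hg1 : g ≠ 1) : ∃ n, g ∈ N n ∧ g ∉ N (n + 1) := by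
  by_contra! hstuck
  have hall : ∀ n, g ∈ N n := fun n => Nat.rec hg (fun n ih => hstuck n ih) n
  have : g ∈ ⨅ n, N n := Subgroup.mem_iInf.2 hall
  rw [hsep] at this
  exact hg1 this

variable (N : ℕ → Subgroup G) [∀ n, ((N (n + 1)).subgroupOf (N n)).Normal]

abbrev Layer (n : ℕ) : Type _ := N n ⧸ (N (n + 1)).subgroupOf (N n)

theorem mk_eq_one_iff {n : ℕ} {g : G} (hg : g ∈ N n) :
    (mk ⟨g, hg⟩ : Layer N n) = 1 ↔ g ∈ N (n + 1) := by
  rw [eq_one_iff, Subgroup.mem_subgroupOf]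

variable [∀ n, LinearOrder (Layer N n)]

def PositiveAt (n : ℕ) (g : G) : Prop :=
  ∃ hg : g ∈ N n, (1 : Layer N n) < mk ⟨g, hg⟩

variable {N} {n m : ℕ} {g h : G}

theorem PositiveAt.mem (hg : PositiveAt N n g) : g ∈ N n := hg.1

theorem PositiveAt.notMem_succ (hg : PositiveAt N n g) : g ∉ N (n + 1) := by
  obtain ⟨hg, hpos⟩ := hg
  exact fun h => hpos.ne' ((mk_eq_one_iff N hg).2 h)

theorem PositiveAt.mul_of_lt (hN : Antitone N) (hg : PositiveAt N n g) (hh : h ∈ N m)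
    (hnm : n < m) : PositiveAt N n (g * h) := by
  obtain ⟨hg, hpos⟩ := hg
  have hh₁ : h ∈ N (n + 1) := hN hnm hh
  have hh₀ : h ∈ N n := hN n.le_succ hh₁
  refine ⟨mul_mem hg hh₀, ?_⟩
  change (1 : Layer N n) < mk (⟨g, hg⟩ : N n) * mk (⟨h, hh₀⟩ : N n)
  rwa [(mk_eq_one_iff N hh₀).2 hh₁, mul_one]

theorem PositiveAt.mul_of_gt (hN : Antitone N) (hg : g ∈ N m) (hh : PositiveAt N n h)
    (hnm : n < m) : PositiveAt N n (g * h) := by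
  obtain ⟨hh, hpos⟩ := hh
  have hg₁ : g ∈ N (n + 1) := hN hnm hg
  have hg₀ : g ∈ N n := hN n.le_succ hg₁
  refine ⟨mul_mem hg₀ hh, ?_⟩
  change (1 : Layer N n) < mk (⟨g, hg₀⟩ : N n) * mk (⟨h, hh⟩ : N n)
  rwa [(mk_eq_one_iff N hg₀).2 hg₁, one_mul]

variable [∀ n, MulLeftMono (Layer N n)]

theorem PositiveAt.mul (hg : PositiveAt N n g) (hh : PositiveAt N n h) :
    PositiveAt N n (g * h) := by
  obtain ⟨hg, hgpos⟩ := hg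
  obtain ⟨hh, hhpos⟩ := hh
  exact ⟨mul_mem hg hh, Left.one_lt_mul' hgpos hhpos⟩

theorem PositiveAt.not_inv (hN : Antitone N) (hg : PositiveAt N n g) :
    ¬PositiveAt N m g⁻¹ := by
  intro hinv
  rcases lt_trichotomy n m with hnm | rfl | hmn
  · exact hg.notMem_succ (by simpa using hN hnm hinv.mem)
  · obtain ⟨hg, hpos⟩ := hg
    obtain ⟨_, hinvpos⟩ := hinv
    exact (Left.one_lt_inv_iff.1 hinvpos).not_gt hpos
  · exact hinv.notMem_succ (inv_mem (hN hmn hg.mem))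

theorem positiveAt_or_positiveAt_inv (hg : g ∈ N n) (hg' : g ∉ N (n + 1)) :
    PositiveAt N n g ∨ PositiveAt N n g⁻¹ := by
  have hne : (mk ⟨g, hg⟩ : Layer N n) ≠ 1 := fun h => hg' ((mk_eq_one_iff N hg).1 h)
  rcases hne.lt_or_gt with hlt | hlt
  · exact Or.inr ⟨inv_mem hg, Left.one_lt_inv_iff.2 hlt⟩
  · exact Or.inl ⟨hg, hlt⟩

variable (N)

def lexCone (hN : Antitone N) : Subsemigroup G where
  carrier := {g | ∃ n, PositiveAt N n g}
  mul_mem' := by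
    rintro g h ⟨n, hg⟩ ⟨m, hh⟩
    rcases lt_trichotomy n m with hnm | rfl | hmn
    · exact ⟨n, hg.mul_of_lt hN hh.mem hnm⟩
    · exact ⟨n, hg.mul hh⟩
    · exact ⟨m, hh.mul_of_gt hN hg.mem hmn⟩

theorem isPositiveCone_lexCone (hN : Antitone N) (hsep : ⨅ n, N n = ⊥) :
    (lexCone N hN).IsPositiveCone (N 0) where
  inv_notMem := fun _ ⟨_, hg⟩ ⟨_, hinv⟩ => hg.not_inv hN hinv
  mem_or_inv_mem g hg hg1 := by
    obtain ⟨n, hn, hn'⟩ := exists_mem_notMem_succ hsep hg hg1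
    exact (positiveAt_or_positiveAt_inv hn hn').imp (fun h => ⟨n, h⟩) (fun h => ⟨n, h⟩)

end Filtration

end

/-- Let `G` be a group whose lower central series intersects in the
trivial subgroup, and suppose each quotient `γₙ(G)/γₙ₊₁(G)` admits a
translation-invariant linear order.  Then every translation-invariant linear order on
the abelianization `G/[G,G]` extends to a left-invariant linear order on `G` which,
on elements with distinct images in the abelianization, agrees with the given order
(a "lexicographic ordering" on `G`). -/
theorem lexicographic_left_order_from_lower_central_series
    {G : Type*} [Group G]
    (hres : ⨅ n : ℕ, (⊤ : Subgroup G).lowerCentralSeries n = ⊥)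
    (hord : ∀ n : ℕ,
      ∃ lo : LinearOrder
        (((⊤ : Subgroup G).lowerCentralSeries n) ⧸
          (((⊤ : Subgroup G).lowerCentralSeries (n + 1)).subgroupOf ((⊤ : Subgroup G).lowerCentralSeries n))),
        ∀ a b c, lo.le a b → lo.le (c * a) (c * b))
    (loA : LinearOrder (Abelianization G))
    (hA : ∀ a b c : Abelianization G, loA.le a b → loA.le (c * a) (c * b)) :
    ∃ lo : LinearOrder G,
      (∀ a b c : G, lo.le a b → lo.le (c * a) (c * b)) ∧
      ∀ g h : G, Abelianization.of g ≠ Abelianization.of h →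
        (lo.le g h ↔ loA.le (Abelianization.of g) (Abelianization.of h)) := by
  choose ord hord using hord
  -- The filtration starts at `γ₁ = ker Abelianization.of`; the top layer is ordered by `loA`.
  let N n := (⊤ : Subgroup G).lowerCentralSeries (n + 1)
  let _ : ∀ n, LinearOrder (Filtration.Layer N n) := fun n => ord (n + 1)
  have _ : ∀ n, MulLeftMono (Filtration.Layer N n) :=
    fun n => ⟨fun c _ _ h => hord (n + 1) _ _ c h⟩
  let _ := loA
  have _ : MulLeftMono (Abelianization G) := ⟨fun c _ _ h => hA _ _ c h⟩
  have hγ := (⊤ : Subgroup G).lowerCentralSeries_antitone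
  have hN : Antitone N := fun _ _ h => hγ (Nat.add_le_add_right h 1)
  have hsep : ⨅ n, N n = ⊥ := (hγ.iInf_nat_add 1).trans hres
  have hlex := Filtration.isPositiveCone_lexCone N hN hsep
  rw [show N 0 = Abelianization.of.ker by
    rw [Abelianization.ker_of, ← Subgroup.top_lowerCentralSeries_one]] at hlex
  have hcone := hlex.liftCone
  exact ⟨hcone.linearOrder, fun _ _ c => hcone.linearOrder_mul_le_mul_left c,
    fun _ _ => hcone.linearOrder_le_iff_of_map_ne⟩
end

section
/- Let G be a countable group with a left-invariant linear order ≤ and let N be a normal subgroup of G such that for all g, h ∈ G with gN ≠ hN, whether g < h depends only on the cosets gN and hN (so ≤ induces a linear order on G/N). Let i₀ : G/N → ℝ be any strictly order-preserving map for the induced order. Then there exist a strictly order-preserving map i : G → ℝ and a continuous monotone nondecreasing map c : ℝ → ℝ such that c(i(g)) = i₀(gN) for all g ∈ G. (That is, i₀ can be obtained from the embedding i by collapsing intervals; i is a 'blow-up' of i₀.) -/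
/-!
Choose positive summable weights `w` on the countable group and push the elements apart:
`i g = i₀ (gN) + ∑_{h < g} w h`. Then `i g + w g ≤ i h` whenever `g < h`, so the intervals
`(i g, i g + w g]` are disjoint, and `c y = y - |U ∩ (-∞, y]|`, with `U` their union, collapses
each of them. As `U` has finite measure, `y ↦ |U ∩ (-∞, y]|` is nondecreasing with slope at
most `1`, so `c` is monotone and continuous; at `y = i g` it removes exactly `∑_{h < g} w h`.
-/

open Function Set MeasureTheory

section Collapse

variable {U : Set ℝ}

noncomputable def collapse (U : Set ℝ) (y : ℝ) : ℝ := y - volume.real (U ∩ Iic y)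

lemma measureReal_inter_Iic_le_add (hU : volume U ≠ ⊤) {y₁ y₂ : ℝ} (h : y₁ ≤ y₂) :
    volume.real (U ∩ Iic y₂) ≤ volume.real (U ∩ Iic y₁) + (y₂ - y₁) := by
  have hsub : U ∩ Iic y₂ ⊆ (U ∩ Iic y₁) ∪ Ioc y₁ y₂ := fun x ⟨hxU, hx⟩ ↦
    (le_or_gt x y₁).imp (fun hx₁ ↦ ⟨hxU, hx₁⟩) (fun hx₁ ↦ ⟨hx₁, hx⟩)
  calc volume.real (U ∩ Iic y₂) ≤ volume.real ((U ∩ Iic y₁) ∪ Ioc y₁ y₂) :=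
        measureReal_mono hsub <| measure_union_ne_top
          (measure_ne_top_of_subset inter_subset_left hU) measure_Ioc_lt_top.ne
    _ ≤ _ := by grw [measureReal_union_le, Real.volume_real_Ioc_of_le h]

lemma monotone_measureReal_inter_Iic (hU : volume U ≠ ⊤) :
    Monotone fun y ↦ volume.real (U ∩ Iic y) := fun _ _ h ↦
  measureReal_mono (inter_subset_inter_right U (Iic_subset_Iic.2 h))
    (measure_ne_top_of_subset inter_subset_left hU)

lemma monotone_collapse (hU : volume U ≠ ⊤) : Monotone (collapse U) := fun _ _ h ↦ by
  have := measureReal_inter_Iic_le_add hU h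
  unfold collapse
  linarith

lemma continuous_collapse (hU : volume U ≠ ⊤) : Continuous (collapse U) := by
  have hT : LipschitzWith 1 fun y ↦ volume.real (U ∩ Iic y) := by
    refine LipschitzWith.of_le_add fun y₁ y₂ ↦ ?_
    rcases le_total y₁ y₂ with h | h
    · exact (monotone_measureReal_inter_Iic hU h).trans (le_add_of_nonneg_right dist_nonneg)
    · rw [Real.dist_eq, abs_of_nonneg (sub_nonneg.2 h)]
      exact measureReal_inter_Iic_le_add hU h
  exact continuous_id.sub hT.continuous

end Collapse

section Gaps

variable {α : Type*} [LinearOrder α] {a w : α → ℝ}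

lemma pairwise_disjoint_Ioc_of_gap (hgap : ∀ ⦃g h⦄, g < h → a g + w g ≤ a h) :
    Pairwise (Disjoint on fun g ↦ Ioc (a g) (a g + w g)) := by
  intro g h hgh
  rcases hgh.lt_or_gt with hlt | hlt
  · exact Ioc_disjoint_Ioc_of_le (hgap hlt)
  · exact (Ioc_disjoint_Ioc_of_le (hgap hlt)).symm

lemma iUnion_Ioc_inter_Iic_of_gap (hw : ∀ g, 0 ≤ w g) (hgap : ∀ ⦃g h⦄, g < h → a g + w g ≤ a h)
    (g : α) : (⋃ h, Ioc (a h) (a h + w h)) ∩ Iic (a g) = ⋃ h : Iio g, Ioc (a h) (a h + w h) := by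
  ext x
  simp only [mem_inter_iff, mem_iUnion, mem_Ioc, mem_Iic, Subtype.exists, mem_Iio, exists_prop]
  constructor
  · rintro ⟨⟨h, hx⟩, hxg⟩
    refine ⟨h, lt_of_not_ge fun hgh ↦ ?_, hx⟩
    have : a g ≤ a h := hgh.eq_or_lt.elim (fun e ↦ e ▸ le_rfl) fun hlt ↦
      (le_add_of_nonneg_right (hw g)).trans (hgap hlt)
    linarith [hx.1]
  · rintro ⟨h, hhg, hx⟩
    exact ⟨⟨h, hx⟩, hx.2.trans (hgap hhg)⟩

lemma volume_iUnion_Ioc_ne_top {ι : Type*} [Countable ι] {a w : ι → ℝ} (hw : ∀ i, 0 ≤ w i)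
    (hsum : Summable w) :
    volume (⋃ i, Ioc (a i) (a i + w i)) ≠ ⊤ := by
  refine ne_top_of_le_ne_top (ENNReal.ofReal_ne_top (r := ∑' i, w i)) ?_
  calc volume (⋃ i, Ioc (a i) (a i + w i)) ≤ ∑' i, volume (Ioc (a i) (a i + w i)) :=
        measure_iUnion_le _
    _ = ENNReal.ofReal (∑' i, w i) := by
        simp only [Real.volume_Ioc, add_sub_cancel_left, ENNReal.ofReal_tsum_of_nonneg hw hsum]

lemma measureReal_iUnion_Ioc_inter_Iic_of_gap [Countable α] (hw : ∀ g, 0 ≤ w g)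
    (hsum : Summable w) (hgap : ∀ ⦃g h⦄, g < h → a g + w g ≤ a h) (g : α) :
    volume.real ((⋃ h, Ioc (a h) (a h + w h)) ∩ Iic (a g)) = ∑' h : Iio g, w h := by
  have hdisj := pairwise_disjoint_Ioc_of_gap (a := fun h : Iio g ↦ a h) (w := fun h ↦ w h)
    fun _ _ hlt ↦ hgap hlt
  rw [iUnion_Ioc_inter_Iic_of_gap hw hgap, measureReal_def,
    measure_iUnion hdisj fun _ ↦ measurableSet_Ioc]
  simp only [Real.volume_Ioc, add_sub_cancel_left]
  rw [← ENNReal.ofReal_tsum_of_nonneg (f := fun h : Iio g ↦ w h) (fun h ↦ hw h) (hsum.subtype _),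
    ENNReal.toReal_ofReal (tsum_nonneg fun h : Iio g ↦ hw h)]

lemma tsum_Iio_add_le_tsum_Iio (hw : ∀ g, 0 ≤ w g) (hsum : Summable w) {g h : α} (hgh : g < h) :
    ∑' x : Iio g, w x + w g ≤ ∑' x : Iio h, w x := by
  calc ∑' x : Iio g, w x + w g = ∑' x : ↥(Iio g ∪ {g}), w x := by
        rw [(hsum.subtype _).tsum_union_disjoint (by simp) (hsum.subtype _), tsum_singleton]
    _ ≤ ∑' x : Iio h, w x := by
        rw [Iio_union_right]
        exact (hsum.subtype _).tsum_le_tsum_of_inj (inclusion (Iic_subset_Iio.2 hgh))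
          (inclusion_injective _) (fun x _ ↦ hw x) (fun x ↦ le_rfl) (hsum.subtype _)

end Gaps

lemma exists_pos_summable (α : Type*) [Countable α] : ∃ w : α → ℝ, (∀ a, 0 < w a) ∧ Summable w := by
  obtain ⟨w, hw, c, hc, -⟩ := NNReal.exists_pos_sum_of_countable one_ne_zero α
  exact ⟨fun a ↦ w a, fun a ↦ NNReal.coe_pos.2 (hw a), (NNReal.hasSum_coe.2 hc).summable⟩

theorem Monotone.exists_strictMono_continuous_factorization {α : Type*} [LinearOrder α]
    [Countable α] {f : α → ℝ} (hf : Monotone f) :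
    ∃ (i : α → ℝ) (c : ℝ → ℝ), StrictMono i ∧ Continuous c ∧ Monotone c ∧ ∀ g, c (i g) = f g := by
  obtain ⟨w, hw, hsum⟩ := exists_pos_summable α
  have hw₀ : ∀ g, 0 ≤ w g := fun g ↦ (hw g).le
  set i : α → ℝ := fun g ↦ f g + ∑' h : Iio g, w h
  have hgap : ∀ ⦃g h⦄, g < h → i g + w g ≤ i h := fun g h hgh ↦ by
    linarith [tsum_Iio_add_le_tsum_Iio hw₀ hsum hgh, hf hgh.le]
  have hU := volume_iUnion_Ioc_ne_top (a := i) hw₀ hsum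
  refine ⟨i, collapse (⋃ h, Ioc (i h) (i h + w h)), fun g h hgh ↦ ?_, continuous_collapse hU,
    monotone_collapse hU, fun g ↦ ?_⟩
  · linarith [hgap hgh, hw g]
  · rw [collapse, measureReal_iUnion_Ioc_inter_Iic_of_gap hw₀ hsum hgap, add_sub_cancel_right]

theorem blow_up_of_quotient_embedding_general
    {G : Type*} [Group G] [Countable G] [LinearOrder G]
    (N : Subgroup G)
    (i₀ : G ⧸ N → ℝ)
    (hi₀ : ∀ g h : G, (g : G ⧸ N) ≠ (h : G ⧸ N) → g < h →
      i₀ (g : G ⧸ N) < i₀ (h : G ⧸ N)) :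
    ∃ (i : G → ℝ) (c : ℝ → ℝ),
      StrictMono i ∧ Continuous c ∧ Monotone c ∧
      ∀ g : G, c (i g) = i₀ (g : G ⧸ N) := by
  refine Monotone.exists_strictMono_continuous_factorization fun g h hgh ↦ ?_
  rcases hgh.lt_or_eq with hlt | rfl
  · by_cases hN : (g : G ⧸ N) = h
    · rw [hN]
    · exact (hi₀ g h hN hlt).le
  · rfl

/-- Let `G` be a countable group with a left-invariant linear order,
and `N` a normal subgroup such that the order, between elements of distinct cosets,
depends only on the cosets (so it induces a linear order on `G/N`).  Given any strictly
order-preserving map `i₀ : G/N → ℝ` (for the induced order), there are a strictly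
order-preserving map `i : G → ℝ` and a continuous monotone map `c : ℝ → ℝ` with
`c (i g) = i₀ (gN)` for all `g`: i.e. `i₀` is obtained from the "blow-up" `i` by
collapsing intervals. -/
theorem blow_up_of_quotient_embedding
    {G : Type*} [Group G] [Countable G] [LinearOrder G]
    [CovariantClass G G (· * ·) (· ≤ ·)]
    (N : Subgroup G) [N.Normal]
    (hdep : ∀ g g' h h' : G, (g : G ⧸ N) = (g' : G ⧸ N) → (h : G ⧸ N) = (h' : G ⧸ N) →
      (g : G ⧸ N) ≠ (h : G ⧸ N) → (g < h ↔ g' < h'))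
    (i₀ : G ⧸ N → ℝ)
    (hi₀ : ∀ g h : G, (g : G ⧸ N) ≠ (h : G ⧸ N) → g < h →
      i₀ (g : G ⧸ N) < i₀ (h : G ⧸ N)) :
    ∃ (i : G → ℝ) (c : ℝ → ℝ),
      StrictMono i ∧ Continuous c ∧ Monotone c ∧
      ∀ g : G, c (i g) = i₀ (g : G ⧸ N) :=
  blow_up_of_quotient_embedding_general N i₀ hi₀
end
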